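/- Étale cover sign count for a multiplicity-2 elliptic fiber: the weighted signed count of connected degree-d unbranched covers of a torus, where a cover corresponding to an index-d subgroup Λ ⊂ ℤ² gets sign +1 or −1 according to whether a fixed nonzero homomorphism ε : ℤ² → ℤ/2 vanishes on Λ or not (with weight 1/d), equals (1/d)[σ(d) − 2σ(d/2)], where σ(d/2) := 0 if d is odd. -/

import Mathlib

/-!
Every finite-index subgroup `H ≤ ℤ²` is spanned by `(a, 0)` and `(c, b)`, where `aℤ` is the
intersection of `H` with `ℤ × 0`, `bℤ` is the projection of `H` to the second factor, and `c` is
unique modulo `a` (Hermite normal form). Hence `ℤ²` has `∑_{ab = e} a = σ(e)` subgroups of index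
`e`, and every finite-index subgroup, in particular `ker ε`, is the image of an injective
endomorphism of `ℤ²`. Pulling back along it, the subgroups of index `d` inside `ker ε` correspond
to the subgroups of index `d / 2` of `ℤ²`, and there are none when `d` is odd.
-/

open AddSubgroup

theorem AddSubgroup.index_eq_relIndex_ker_mul_index_map {G G' : Type*} [AddGroup G] [AddGroup G']
    {f : G →+ G'} (hf : Function.Surjective f) (H : AddSubgroup G) [H.Normal] :
    H.index = H.relIndex f.ker * (H.map f).index := by
  rw [← relIndex_mul_index (le_sup_left : H ≤ H ⊔ f.ker), relIndex_sup_left, index_map,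
    f.range_eq_top_of_surjective hf, index_top, mul_one]

theorem AddSubgroup.index_eq_index_comap_inl_mul_index_map_snd {G G' : Type*} [AddCommGroup G]
    [AddCommGroup G'] (H : AddSubgroup (G × G')) :
    H.index = (H.comap (AddMonoidHom.inl G G')).index * (H.map (AddMonoidHom.snd G G')).index := by
  have hker : (AddMonoidHom.snd G G').ker = (AddMonoidHom.inl G G').range := by
    ext ⟨x, y⟩; simp [mem_prod, eq_comm]
  rw [index_eq_relIndex_ker_mul_index_map (f := AddMonoidHom.snd G G') Prod.snd_surjective, hker,
    index_comap]

theorem Int.eq_zmultiples_index (A : AddSubgroup ℤ) : A = zmultiples (A.index : ℤ) := by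
  obtain ⟨g, rfl⟩ := Int.subgroup_cyclic A
  rw [← zmultiples_eq_closure, Int.index_zmultiples, Int.zmultiples_natAbs]

theorem Int.natCast_index_mem (A : AddSubgroup ℤ) : (A.index : ℤ) ∈ A := by
  have h := mem_zmultiples (A.index : ℤ)
  rwa [← Int.eq_zmultiples_index A] at h

def hermiteMap (a b c : ℤ) : ℤ × ℤ →+ ℤ × ℤ where
  toFun p := (a * p.1 + c * p.2, b * p.2)
  map_zero' := by simp
  map_add' p q := by simp only [Prod.fst_add, Prod.snd_add, Prod.mk_add_mk]; ring_nf

section hermiteMap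

variable {a b c : ℤ}

theorem mem_range_hermiteMap {p : ℤ × ℤ} :
    p ∈ (hermiteMap a b c).range ↔ ∃ v, p.2 = b * v ∧ a ∣ p.1 - c * v := by
  constructor
  · rintro ⟨⟨u, v⟩, rfl⟩
    exact ⟨v, rfl, u, by simp [hermiteMap]⟩
  · rintro ⟨v, hv, u, hu⟩
    exact ⟨(u, v), Prod.ext (by simp [hermiteMap]; linarith) hv.symm⟩

theorem hermiteMap_injective (ha : a ≠ 0) (hb : b ≠ 0) : Function.Injective (hermiteMap a b c) := by
  rintro ⟨u, v⟩ ⟨u', v'⟩ h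
  simp only [hermiteMap, AddMonoidHom.coe_mk, ZeroHom.coe_mk, Prod.mk.injEq] at h
  have hv : v = v' := mul_left_cancel₀ hb h.2
  subst hv
  simpa using mul_left_cancel₀ ha (add_right_cancel h.1)

theorem comap_inl_range_hermiteMap (hb : b ≠ 0) :
    (hermiteMap a b c).range.comap (AddMonoidHom.inl ℤ ℤ) = zmultiples a := by
  ext x
  simp only [mem_comap, AddMonoidHom.inl_apply, mem_range_hermiteMap, Int.mem_zmultiples_iff]
  constructor
  · rintro ⟨v, hv, hdvd⟩
    obtain rfl : v = 0 := by simpa [hb] using hv.symm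
    simpa using hdvd
  · exact fun h => ⟨0, by simp, by simpa using h⟩

theorem map_snd_range_hermiteMap :
    (hermiteMap a b c).range.map (AddMonoidHom.snd ℤ ℤ) = zmultiples b := by
  ext y
  simp only [mem_map, AddMonoidHom.coe_snd, Int.mem_zmultiples_iff]
  constructor
  · rintro ⟨p, hp, rfl⟩
    obtain ⟨v, hv, -⟩ := mem_range_hermiteMap.mp hp
    exact ⟨v, hv⟩
  · rintro ⟨v, rfl⟩
    exact ⟨hermiteMap a b c (0, v), ⟨_, rfl⟩, rfl⟩

theorem index_range_hermiteMap (hb : b ≠ 0) :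
    (hermiteMap a b c).range.index = a.natAbs * b.natAbs := by
  rw [index_eq_index_comap_inl_mul_index_map_snd, comap_inl_range_hermiteMap hb,
    map_snd_range_hermiteMap, Int.index_zmultiples, Int.index_zmultiples]

theorem range_hermiteMap_le_iff {H : AddSubgroup (ℤ × ℤ)} :
    (hermiteMap a b c).range ≤ H ↔ (a, 0) ∈ H ∧ (c, b) ∈ H := by
  refine ⟨fun h => ⟨h ⟨(1, 0), by simp [hermiteMap]⟩, h ⟨(0, 1), by simp [hermiteMap]⟩⟩, ?_⟩
  rintro ⟨h₁, h₂⟩ _ ⟨⟨u, v⟩, rfl⟩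
  have : hermiteMap a b c (u, v) = u • (a, 0) + v • (c, b) := by
    simp [hermiteMap, mul_comm]
  rw [this]
  exact add_mem (zsmul_mem h₁ u) (zsmul_mem h₂ v)

theorem range_hermiteMap_eq_iff {c' : ℤ} (hb : b ≠ 0) :
    (hermiteMap a b c).range = (hermiteMap a b c').range ↔ a ∣ c - c' := by
  have key : ∀ {c c' : ℤ}, (c, b) ∈ (hermiteMap a b c').range ↔ a ∣ c - c' := by
    intro c c'
    rw [mem_range_hermiteMap]
    constructor
    · rintro ⟨v, hv, hdvd⟩
      obtain rfl : v = 1 := mul_left_cancel₀ hb (hv.symm.trans (mul_one b).symm)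
      simpa using hdvd
    · exact fun h => ⟨1, by simp, by simpa using h⟩
  have generators := fun {c} => range_hermiteMap_le_iff.mp (le_refl (hermiteMap a b c).range)
  refine ⟨fun h => key.mp (h ▸ generators.2), fun h => le_antisymm ?_ ?_⟩
  · exact range_hermiteMap_le_iff.mpr ⟨generators.1, key.mpr h⟩
  · exact range_hermiteMap_le_iff.mpr ⟨generators.1, key.mpr (dvd_sub_comm.mp h)⟩

end hermiteMap

theorem exists_eq_range_hermiteMap {H : AddSubgroup (ℤ × ℤ)} (hH : H.index ≠ 0) :
    ∃ c : ℤ, H = (hermiteMap (H.comap (AddMonoidHom.inl ℤ ℤ)).index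
      (H.map (AddMonoidHom.snd ℤ ℤ)).index c).range := by
  have hidx := index_eq_index_comap_inl_mul_index_map_snd H
  have hb : ((H.map (AddMonoidHom.snd ℤ ℤ)).index : ℤ) ≠ 0 :=
    Nat.cast_ne_zero.mpr (right_ne_zero_of_mul (hidx ▸ hH))
  obtain ⟨⟨c, y⟩, hcH, rfl⟩ := Int.natCast_index_mem (H.map (AddMonoidHom.snd ℤ ℤ))
  have hle : (hermiteMap _ _ c).range ≤ H :=
    range_hermiteMap_le_iff.mpr ⟨Int.natCast_index_mem (H.comap (AddMonoidHom.inl ℤ ℤ)), hcH⟩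
  refine ⟨c, le_antisymm ?_ hle⟩
  rw [← relIndex_eq_one]
  have h := relIndex_mul_index hle
  rw [index_range_hermiteMap hb, Int.natAbs_natCast, Int.natAbs_natCast, ← hidx] at h
  exact (Nat.mul_eq_right hH).mp h

theorem exists_injective_range_eq {H : AddSubgroup (ℤ × ℤ)} (hH : H.index ≠ 0) :
    ∃ f : ℤ × ℤ →+ ℤ × ℤ, Function.Injective f ∧ f.range = H := by
  obtain ⟨c, hc⟩ := exists_eq_range_hermiteMap hH
  rw [index_eq_index_comap_inl_mul_index_map_snd H] at hH
  exact ⟨_, hermiteMap_injective (Nat.cast_ne_zero.mpr (left_ne_zero_of_mul hH))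
    (Nat.cast_ne_zero.mpr (right_ne_zero_of_mul hH)), hc.symm⟩

theorem eq_of_range_hermiteMap_eq {a b a' b' : ℕ} {c c' : ℤ} (hb : (b : ℤ) ≠ 0)
    (hb' : (b' : ℤ) ≠ 0)
    (h : (hermiteMap a b c).range = (hermiteMap a' b' c').range) :
    a = a' ∧ b = b' ∧ (a : ℤ) ∣ c - c' := by
  have haa' := congrArg (fun L => (L.comap (AddMonoidHom.inl ℤ ℤ)).index) h
  have hbb' := congrArg (fun L => (L.map (AddMonoidHom.snd ℤ ℤ)).index) h
  simp only [comap_inl_range_hermiteMap hb, comap_inl_range_hermiteMap hb',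
    map_snd_range_hermiteMap, Int.index_zmultiples, Int.natAbs_natCast] at haa' hbb'
  subst haa' hbb'
  exact ⟨rfl, rfl, (range_hermiteMap_eq_iff hb).mp h⟩

noncomputable def hermiteLattice (e : ℕ) (q : Σ p : e.divisorsAntidiagonal, ZMod p.1.1) :
    {H : AddSubgroup (ℤ × ℤ) // H.index = e} :=
  ⟨(hermiteMap q.1.1.1 q.1.1.2 (q.2.cast : ℤ)).range, by
    obtain ⟨⟨⟨a, b⟩, hp⟩, t⟩ := q
    rw [index_range_hermiteMap (by exact_mod_cast Nat.right_ne_zero_of_mem_divisorsAntidiagonal hp),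
      Int.natAbs_natCast, Int.natAbs_natCast, (Nat.mem_divisorsAntidiagonal.mp hp).1]⟩

theorem hermiteLattice_bijective {e : ℕ} (he : e ≠ 0) : Function.Bijective (hermiteLattice e) := by
  constructor
  · rintro ⟨⟨⟨a, b⟩, hp⟩, t⟩ ⟨⟨⟨a', b'⟩, hp'⟩, t'⟩ h
    have h' : (hermiteMap a b t.cast).range = (hermiteMap a' b' t'.cast).range :=
      congrArg Subtype.val h
    obtain ⟨rfl, rfl, hdvd⟩ := eq_of_range_hermiteMap_eq
      (by exact_mod_cast Nat.right_ne_zero_of_mem_divisorsAntidiagonal hp)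
      (by exact_mod_cast Nat.right_ne_zero_of_mem_divisorsAntidiagonal hp') h'
    obtain rfl : t' = t := by
      rwa [← ZMod.intCast_eq_intCast_iff_dvd_sub, ZMod.intCast_zmod_cast,
        ZMod.intCast_zmod_cast] at hdvd
    rfl
  · rintro ⟨H, rfl⟩
    obtain ⟨c, hc⟩ := exists_eq_range_hermiteMap he
    have hp : ((H.comap (AddMonoidHom.inl ℤ ℤ)).index, (H.map (AddMonoidHom.snd ℤ ℤ)).index) ∈
        H.index.divisorsAntidiagonal := Nat.mem_divisorsAntidiagonal.mpr
      ⟨(index_eq_index_comap_inl_mul_index_map_snd H).symm, he⟩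
    have hb : ((H.map (AddMonoidHom.snd ℤ ℤ)).index : ℤ) ≠ 0 := by
      exact_mod_cast Nat.right_ne_zero_of_mem_divisorsAntidiagonal hp
    refine ⟨⟨⟨_, hp⟩, (c : ZMod _)⟩, Subtype.ext ?_⟩
    change (hermiteMap _ _ _).range = H
    conv_rhs => rw [hc]
    rw [range_hermiteMap_eq_iff hb, ← ZMod.intCast_eq_intCast_iff_dvd_sub, ZMod.intCast_zmod_cast]

theorem card_addSubgroup_index_eq {e : ℕ} (he : e ≠ 0) :
    Nat.card {H : AddSubgroup (ℤ × ℤ) // H.index = e} = ∑ k ∈ e.divisors, k := by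
  have : ∀ p : e.divisorsAntidiagonal, Finite (ZMod p.1.1) := fun p =>
    Nat.finite_of_card_ne_zero (by
      rw [Nat.card_zmod]; exact Nat.left_ne_zero_of_mem_divisorsAntidiagonal p.2)
  rw [← Nat.card_congr (Equiv.ofBijective _ (hermiteLattice_bijective he)), Nat.card_sigma]
  simp only [Nat.card_zmod]
  rw [Finset.sum_coe_sort e.divisorsAntidiagonal (fun p => p.1),
    Nat.sum_divisorsAntidiagonal (fun a _ => a)]

theorem AddSubgroup.card_index_eq_mul_le_range {G G' : Type*} [AddGroup G] [AddGroup G']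
    {f : G' →+ G} (hf : Function.Injective f) (hf₀ : f.range.index ≠ 0) (n : ℕ) :
    Nat.card {H : AddSubgroup G // H.index = n * f.range.index ∧ H ≤ f.range} =
      Nat.card {H : AddSubgroup G' // H.index = n} :=
  Nat.card_congr
    { toFun H := ⟨H.1.comap f, by
        rw [index_comap]
        exact Nat.eq_of_mul_eq_mul_right (Nat.pos_of_ne_zero hf₀)
          ((relIndex_mul_index H.2.2).trans H.2.1)⟩
      invFun H := ⟨H.1.map f, by rw [H.1.index_map_of_injective hf, H.2], map_le_range _ _⟩
      left_inv H := Subtype.ext (map_comap_eq_self H.2.2)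
      right_inv H := Subtype.ext (comap_map_eq_self_of_injective hf H.1) }

theorem card_addSubgroup_index_eq_le {K : AddSubgroup (ℤ × ℤ)} (hK : K.index ≠ 0) {d : ℕ}
    (hd : d ≠ 0) :
    Nat.card {H : AddSubgroup (ℤ × ℤ) // H.index = d ∧ H ≤ K} =
      if K.index ∣ d then ∑ k ∈ (d / K.index).divisors, k else 0 := by
  obtain ⟨f, hf, rfl⟩ := exists_injective_range_eq hK
  split_ifs with hdvd
  · obtain ⟨n, rfl⟩ := hdvd
    rw [Nat.mul_div_cancel_left n (Nat.pos_of_ne_zero hK), mul_comm,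
      card_index_eq_mul_le_range hf hK, card_addSubgroup_index_eq (right_ne_zero_of_mul hd)]
  · exact Nat.card_eq_zero.mpr (Or.inl ⟨fun H => hdvd (H.2.1 ▸ index_dvd_of_le H.2.2)⟩)

theorem Nat.card_subtype_and_add_card_subtype_and_not {α : Type*} {p q : α → Prop}
    (hp : {x | p x}.Finite) :
    Nat.card {x // p x ∧ q x} + Nat.card {x // p x ∧ ¬ q x} = Nat.card {x // p x} :=
  Set.ncard_inter_add_ncard_sdiff_eq_ncard {x | p x} {x | q x} hp

/-- Signed étale-cover count for a multiplicity-2 elliptic fiber: among the index-`d`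
subgroups `Λ ≤ ℤ²` (degree-`d` connected covers of the torus), those contained in the
kernel of a fixed surjection `ε : ℤ² → ℤ/2` number `σ(d/2)` (zero if `d` is odd), and
the weighted signed count (`+1` if `Λ ⊄ ker ε`, `−1` if `Λ ⊆ ker ε`, each with weight
`1/d`) equals `(σ(d) − 2σ(d/2))/d`. -/
theorem signed_cover_count_multiple_fiber
    (d : ℕ) (hd : 0 < d) (ε : (ℤ × ℤ) →+ ZMod 2) (hε : Function.Surjective ε) :
    (Nat.card {H : AddSubgroup (ℤ × ℤ) // H.index = d ∧ H ≤ ε.ker}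
        = if 2 ∣ d then ∑ k ∈ (d / 2).divisors, k else 0) ∧
    ((Nat.card {H : AddSubgroup (ℤ × ℤ) // H.index = d ∧ ¬ H ≤ ε.ker} : ℚ)
        - Nat.card {H : AddSubgroup (ℤ × ℤ) // H.index = d ∧ H ≤ ε.ker}) / d
      = ((∑ k ∈ d.divisors, k : ℚ)
          - 2 * (if 2 ∣ d then ∑ k ∈ (d / 2).divisors, (k : ℚ) else 0)) / d := by
  have hK : ε.ker.index = 2 := by
    rw [index_ker, ε.range_eq_top_of_surjective hε, card_top, Nat.card_zmod]
  have hcontained := card_addSubgroup_index_eq_le (hK ▸ two_ne_zero) hd.ne'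
  rw [hK] at hcontained
  have hall := card_addSubgroup_index_eq hd.ne'
  have : Finite {H : AddSubgroup (ℤ × ℤ) // H.index = d} := Nat.finite_of_card_ne_zero <| by
    rw [hall]
    exact (Finset.sum_pos (fun k hk => Nat.pos_of_mem_divisors hk)
      ⟨d, Nat.mem_divisors_self d hd.ne'⟩).ne'
  have hsplit := Nat.card_subtype_and_add_card_subtype_and_not (q := (· ≤ ε.ker))
    (Set.finite_coe_iff.mp this)
  rw [hcontained, hall] at hsplit
  refine ⟨hcontained, ?_⟩
  have hsplitℚ := congrArg (Nat.cast : ℕ → ℚ) hsplit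
  push_cast at hsplitℚ
  rw [hcontained, ← hsplitℚ]
  push_cast
  ring
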